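/- Let d ≥ 3 and let A ∈ ℂ^{d×d} satisfy condition (C_d) with (−1)^{d−1}·det(A) > 0 (in particular det(A) is real). Then the numerical range W(A) is invariant under complex conjugation: { conj(z) : z ∈ W(A) } = W(A). -/

import Mathlib

open Matrix Complex

/-- The numerical range of a matrix `A`, `W(A) = { ⟨x, A x⟩ : ‖x‖ = 1 }`. -/
noncomputable def numRange {d : ℕ} (A : Matrix (Fin d) (Fin d) ℂ) : Set ℂ :=
  { z | ∃ x : EuclideanSpace ℂ (Fin d), ‖x‖ = 1 ∧
      z = inner ℂ x (WithLp.toLp 2 (A.mulVec x : Fin d → ℂ) : EuclideanSpace ℂ (Fin d)) }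

/-- Condition `(C_d)`. -/
def CondC {d : ℕ} (A : Matrix (Fin d) (Fin d) ℂ) : Prop :=
  ∃ P : Polynomial ℝ, ∀ θ : ℝ, ∀ w : ℂ,
    (w • (1 : Matrix (Fin d) (Fin d) ℂ)
        - (1/2 : ℂ) • (Complex.exp (-(θ : ℂ) * Complex.I) • A
            + Complex.exp ((θ : ℂ) * Complex.I) • Aᴴ)).det
      = Polynomial.aeval w P
        - ((-1/2 : ℂ)) ^ (d - 1)
            * ((Complex.exp (-(d : ℂ) * (θ : ℂ) * Complex.I) * A.det).re : ℂ)

noncomputable def sesq {d : ℕ} (A : Matrix (Fin d) (Fin d) ℂ) (x y : EuclideanSpace ℂ (Fin d)) : ℂ :=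
  inner ℂ x (WithLp.toLp 2 (A.mulVec y : Fin d → ℂ) : EuclideanSpace ℂ (Fin d))

section sesqlem
variable {d : ℕ} (A B : Matrix (Fin d) (Fin d) ℂ) (x y z : EuclideanSpace ℂ (Fin d)) (c : ℂ)

theorem sesq_eq_dot : sesq A x y = dotProduct (star (x : Fin d → ℂ)) (A.mulVec y) := by
  simp [sesq, PiLp.inner_apply, dotProduct, RCLike.inner_apply, mul_comm]

theorem sesq_add_right : sesq A x (y + z) = sesq A x y + sesq A x z := by
  simp only [sesq_eq_dot]
  rw [show ((y + z : EuclideanSpace ℂ (Fin d)) : Fin d → ℂ) = (y : Fin d → ℂ) + z from rfl,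
    Matrix.mulVec_add, dotProduct_add]

theorem sesq_smul_right : sesq A x (c • y) = c * sesq A x y := by
  simp only [sesq_eq_dot]
  rw [show ((c • y : EuclideanSpace ℂ (Fin d)) : Fin d → ℂ) = c • (y : Fin d → ℂ) from rfl,
    Matrix.mulVec_smul, dotProduct_smul, smul_eq_mul]

theorem sesq_add_left : sesq A (x + y) z = sesq A x z + sesq A y z := by
  simp only [sesq_eq_dot]
  rw [show ((x + y : EuclideanSpace ℂ (Fin d)) : Fin d → ℂ) = (x : Fin d → ℂ) + y from rfl,
    star_add, add_dotProduct]

theorem sesq_smul_left : sesq A (c • x) y = (starRingEnd ℂ) c * sesq A x y := by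
  simp only [sesq_eq_dot]
  rw [show ((c • x : EuclideanSpace ℂ (Fin d)) : Fin d → ℂ) = c • (x : Fin d → ℂ) from rfl,
    star_smul, smul_dotProduct, smul_eq_mul]
  rfl

theorem sesq_add_mat : sesq (A + B) x y = sesq A x y + sesq B x y := by
  simp only [sesq_eq_dot, Matrix.add_mulVec, dotProduct_add]

theorem sesq_smul_mat : sesq (c • A) x y = c * sesq A x y := by
  simp only [sesq_eq_dot, Matrix.smul_mulVec, dotProduct_smul, smul_eq_mul]

theorem sesq_sub_mat : sesq (A - B) x y = sesq A x y - sesq B x y := by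
  simp only [sesq_eq_dot, Matrix.sub_mulVec, dotProduct_sub]

theorem sesq_one (h : ‖x‖ = 1) : sesq (1 : Matrix (Fin d) (Fin d) ℂ) x x = 1 := by
  have h2 := inner_self_eq_norm_sq_to_K (𝕜 := ℂ) x
  rw [h] at h2
  simp only [sesq_eq_dot, Matrix.one_mulVec]
  have h3 : inner ℂ x x = (1 : ℂ) := by rw [h2]; simp
  rw [← h3]
  simp only [PiLp.inner_apply, RCLike.inner_apply, dotProduct, Pi.star_apply, RCLike.star_def]
  exact Finset.sum_congr rfl fun i _ => mul_comm _ _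

theorem sesq_conjTranspose : sesq Aᴴ x x = (starRingEnd ℂ) (sesq A x x) := by
  simp only [sesq_eq_dot, dotProduct, Matrix.mulVec, Finset.mul_sum, map_sum,
    _root_.map_mul, Matrix.conjTranspose_apply, Pi.star_apply, Complex.star_def,
    Complex.conj_conj]
  rw [Finset.sum_comm]
  exact Finset.sum_congr rfl fun i _ => Finset.sum_congr rfl fun j _ => by ring

theorem sesq_expand (c₁ c₂ : ℂ) :
    sesq B (c₁ • x + c₂ • y) (c₁ • x + c₂ • y)
      = (starRingEnd ℂ) c₁ * c₁ * sesq B x x + (starRingEnd ℂ) c₁ * c₂ * sesq B x y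
        + (starRingEnd ℂ) c₂ * c₁ * sesq B y x + (starRingEnd ℂ) c₂ * c₂ * sesq B y y := by
  simp only [sesq_add_left, sesq_add_right, sesq_smul_left, sesq_smul_right]
  ring

theorem sesq_one_eq_inner : sesq (1 : Matrix (Fin d) (Fin d) ℂ) x y = inner ℂ x y := by
  simp only [sesq]
  rw [show (WithLp.toLp 2 ((1 : Matrix (Fin d) (Fin d) ℂ).mulVec y : Fin d → ℂ) : EuclideanSpace ℂ (Fin d))
      = y from by rw [Matrix.one_mulVec]]

end sesqlem

theorem segment_mem {d : ℕ} (B : Matrix (Fin d) (Fin d) ℂ) (x y : EuclideanSpace ℂ (Fin d))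
    (hx : ‖x‖ = 1) (hy : ‖y‖ = 1) (h0 : sesq B x x = 0) (h1 : sesq B y y = 1)
    (t : ℝ) (ht0 : 0 ≤ t) (ht1 : t ≤ 1) :
    ∃ v : EuclideanSpace ℂ (Fin d), ‖v‖ = 1 ∧ sesq B v v = (t : ℂ) := by
  classical
  set a := sesq B x y with ha
  set b := sesq B y x with hb
  set c : ℂ := a - (starRingEnd ℂ) b with hc
  obtain ⟨μ0, hμ0norm, hμ0⟩ : ∃ μ0 : ℂ, ‖μ0‖ = 1 ∧ (μ0 * c).im = 0 := by
    by_cases h : c = 0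
    · exact ⟨1, by simp, by simp [h]⟩
    · refine ⟨(‖c‖ : ℂ)⁻¹ * (starRingEnd ℂ) c, ?_, ?_⟩
      · rw [norm_mul, norm_inv, RCLike.norm_conj, Complex.norm_real, Real.norm_eq_abs,
          _root_.abs_of_nonneg (norm_nonneg c)]
        field_simp [norm_ne_zero_iff.2 h]
      · have h2 : (‖c‖ : ℂ)⁻¹ * (starRingEnd ℂ) c * c = ((‖c‖ : ℝ) : ℂ) := by
          have hne : ‖c‖ ≠ 0 := norm_ne_zero_iff.2 h
          rw [mul_assoc, mul_comm ((starRingEnd ℂ) c) c, Complex.mul_conj', pow_two,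
            ← mul_assoc, inv_mul_cancel₀ (Complex.ofReal_ne_zero.2 hne), one_mul]
        rw [h2]; simp
  set σ : ℝ := if 0 ≤ (μ0 * (inner ℂ x y : ℂ)).re then 1 else -1 with hσ
  have hσ1 : σ = 1 ∨ σ = -1 := by unfold σ; split <;> simp
  set μ : ℂ := (σ : ℂ) * μ0 with hμ
  have hμnorm : ‖μ‖ = 1 := by
    rw [norm_mul, hμ0norm, mul_one, Complex.norm_real, Real.norm_eq_abs]
    rcases hσ1 with h | h <;> rw [h] <;> norm_num
  have hμim : (μ * c).im = 0 := by
    rw [hμ, mul_assoc, Complex.im_ofReal_mul, hμ0, mul_zero]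
  set r : ℝ := (μ * (inner ℂ x y : ℂ)).re with hr
  have hr0 : 0 ≤ r := by
    rw [hr, hμ, mul_assoc, Complex.re_ofReal_mul]
    unfold σ; split
    · rename_i hcond; simpa using hcond
    · rename_i hcond
      push_neg at hcond
      nlinarith
  set y' : EuclideanSpace ℂ (Fin d) := μ • y with hy'def
  have hy'norm : ‖y'‖ = 1 := by rw [hy'def, norm_smul, hμnorm, hy, mul_one]
  have hμμ : (starRingEnd ℂ) μ * μ = 1 := by
    rw [mul_comm, Complex.mul_conj', hμnorm]; norm_num
  have h1' : sesq B y' y' = 1 := by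
    rw [hy'def, sesq_smul_left, sesq_smul_right, ← mul_assoc, hμμ, one_mul, h1]
  -- cross term
  have hxy' : sesq B x y' = μ * a := by rw [hy'def, sesq_smul_right, ha]
  have hy'x : sesq B y' x = (starRingEnd ℂ) μ * b := by rw [hy'def, sesq_smul_left, hb]
  set K : ℝ := (μ * a + (starRingEnd ℂ) μ * b).re with hK
  have hcross : sesq B x y' + sesq B y' x = (K : ℂ) := by
    rw [hxy', hy'x]
    have him : (μ * a + (starRingEnd ℂ) μ * b).im = 0 := by
      have e1 : (starRingEnd ℂ) μ * b = (starRingEnd ℂ) (μ * (starRingEnd ℂ) b) := by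
        conv_rhs => rw [RingHom.map_mul, Complex.conj_conj]
      rw [Complex.add_im, e1, Complex.conj_im]
      have : (μ * a).im - (μ * (starRingEnd ℂ) b).im = (μ * c).im := by
        rw [hc, mul_sub, Complex.sub_im]
      rw [← sub_eq_add_neg, this, hμim]
    exact Complex.ext (by simp [hK]) (by simp [him])
  -- inner ℂ products
  have hxx : (inner ℂ x x : ℂ) = 1 := by
    rw [inner_self_eq_norm_sq_to_K, hx]; norm_num
  have hyy' : (inner ℂ y' y' : ℂ) = 1 := by
    rw [inner_self_eq_norm_sq_to_K, hy'norm]; norm_num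
  have hinner_cross : (inner ℂ x y' : ℂ) + (inner ℂ y' x : ℂ) = (2 * r : ℝ) := by
    have e1 : (inner ℂ x y' : ℂ) = μ * (inner ℂ x y : ℂ) := by
      rw [hy'def]; exact inner_smul_right _ _ _
    have e2 : (inner ℂ y' x : ℂ) = (starRingEnd ℂ) ((inner ℂ x y' : ℂ)) := by
      rw [← inner_conj_symm]
    rw [e2, e1, Complex.add_conj, hr]
  -- the path
  set N : ℝ → ℝ := fun s => (1 - s) ^ 2 + s ^ 2 + 2 * s * (1 - s) * r with hN
  set V : ℝ → ℝ := fun s => s ^ 2 + s * (1 - s) * K with hV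
  have hNpos : ∀ s ∈ Set.Icc (0 : ℝ) 1, 0 < N s := by
    intro s hs
    obtain ⟨hs0, hs1⟩ := hs
    have h2 : 0 ≤ 2 * s * (1 - s) * r := by
      have h3 : (0:ℝ) ≤ 2 * s * (1 - s) := by nlinarith
      exact mul_nonneg h3 hr0
    simp only [hN]
    nlinarith [sq_nonneg (1 - 2 * s)]
  set u : ℝ → EuclideanSpace ℂ (Fin d) :=
    fun s => ((1 - s : ℝ) : ℂ) • x + ((s : ℝ) : ℂ) • y' with hu
  have hval : ∀ s : ℝ, sesq B (u s) (u s) = ((V s : ℝ) : ℂ) := by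
    intro s
    rw [hu]
    simp only []
    rw [sesq_expand, h0, h1', Complex.conj_ofReal, Complex.conj_ofReal]
    simp only [hV]
    push_cast
    linear_combination ((s : ℂ) * (1 - s)) * hcross
  have hnorm2 : ∀ s : ℝ, (inner ℂ (u s) (u s) : ℂ) = ((N s : ℝ) : ℂ) := by
    intro s
    rw [← sesq_one_eq_inner, hu]
    simp only []
    rw [sesq_expand, sesq_one_eq_inner, sesq_one_eq_inner, sesq_one_eq_inner,
      sesq_one_eq_inner, hxx, hyy', Complex.conj_ofReal, Complex.conj_ofReal]
    simp only [hN]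
    have hic : (inner ℂ x y' : ℂ) + (inner ℂ y' x : ℂ) = 2 * (r : ℂ) := by
      rw [hinner_cross]; push_cast; ring
    push_cast
    linear_combination ((s : ℂ) * (1 - s)) * hic
  have hnorm : ∀ s : ℝ, ‖u s‖ ^ 2 = N s := by
    intro s
    have h2 := inner_self_eq_norm_sq_to_K (𝕜 := ℂ) (u s)
    rw [hnorm2 s] at h2
    have h3 := congrArg Complex.re h2
    simpa [← RCLike.ofReal_pow, pow_two, Complex.mul_re] using h3.symm
  set G : ℝ → ℝ := fun s => V s / N s with hG
  have hcont : ContinuousOn G (Set.Icc 0 1) := by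
    apply ContinuousOn.div
    · apply Continuous.continuousOn
      simp only [hV]
      fun_prop
    · apply Continuous.continuousOn
      simp only [hN]
      fun_prop
    · intro s hs
      exact (hNpos s hs).ne'
  have hG0 : G 0 = 0 := by simp [hG, hV, hN]
  have hG1 : G 1 = 1 := by simp [hG, hV, hN]
  have hmem : t ∈ Set.Icc (G 0) (G 1) := by
    rw [hG0, hG1]; exact ⟨ht0, ht1⟩
  obtain ⟨s, hsmem, hGs⟩ := intermediate_value_Icc (by norm_num : (0:ℝ) ≤ 1) hcont hmem
  have hNs := hNpos s hsmem
  have hus : ‖u s‖ ≠ 0 := by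
    intro h2
    rw [← hnorm s, h2] at hNs
    norm_num at hNs
  refine ⟨((‖u s‖⁻¹ : ℝ) : ℂ) • u s, ?_, ?_⟩
  · rw [norm_smul, Complex.norm_real, Real.norm_eq_abs,
      _root_.abs_of_nonneg (inv_nonneg.2 (norm_nonneg _)), inv_mul_cancel₀ hus]
  · rw [sesq_smul_left, sesq_smul_right, Complex.conj_ofReal, hval s]
    have h4 : V s / N s = t := by rw [← hGs]
    have h3 : ‖u s‖⁻¹ * (‖u s‖⁻¹ * V s) = t := by
      rw [← h4, ← hnorm s, pow_two]
      field_simp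
    exact_mod_cast h3


theorem mem_numRange_iff {d : ℕ} {A : Matrix (Fin d) (Fin d) ℂ} {z : ℂ} :
    z ∈ numRange A ↔ ∃ x : EuclideanSpace ℂ (Fin d), ‖x‖ = 1 ∧ z = sesq A x x := Iff.rfl

theorem convex_numRange {d : ℕ} (A : Matrix (Fin d) (Fin d) ℂ) : Convex ℝ (numRange A) := by
  intro z1 hz1 z2 hz2 p q hp hq hpq
  obtain ⟨x, hx, hzx⟩ := mem_numRange_iff.mp hz1
  obtain ⟨y, hy, hzy⟩ := mem_numRange_iff.mp hz2
  by_cases hzz : z1 = z2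
  · subst hzz
    refine mem_numRange_iff.mpr ⟨x, hx, ?_⟩
    rw [← hzx, ← add_smul, hpq, one_smul]
  · set α : ℂ := (z2 - z1)⁻¹ with hαdef
    set B := α • A + (-(α * z1)) • (1 : Matrix (Fin d) (Fin d) ℂ) with hB
    have hsB : ∀ v : EuclideanSpace ℂ (Fin d), ‖v‖ = 1 →
        sesq B v v = α * sesq A v v - α * z1 := by
      intro v hv
      rw [hB, sesq_add_mat, sesq_smul_mat, sesq_smul_mat, sesq_one _ hv]
      ring
    have hz21 : z2 - z1 ≠ 0 := sub_ne_zero.2 (Ne.symm hzz)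
    have hα : α * (z2 - z1) = 1 := inv_mul_cancel₀ hz21
    have hαne : α ≠ 0 := inv_ne_zero hz21
    have h0 : sesq B x x = 0 := by rw [hsB x hx, ← hzx]; ring
    have h1 : sesq B y y = 1 := by
      rw [hsB y hy, ← hzy]
      linear_combination hα
    obtain ⟨v, hv, hval⟩ := segment_mem B x y hx hy h0 h1 q hq (by linarith)
    refine mem_numRange_iff.mpr ⟨v, hv, ?_⟩
    have h2 := hsB v hv
    rw [hval] at h2
    have h5 : sesq A v v = z1 + (q : ℂ) * (z2 - z1) := by
      apply mul_left_cancel₀ hαne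
      rw [show α * sesq A v v = (q : ℂ) + α * z1 from by linear_combination -h2]
      linear_combination (-(q : ℂ)) * hα
    have hpq' : (p : ℂ) + (q : ℂ) = 1 := by exact_mod_cast hpq
    rw [h5, Complex.real_smul, Complex.real_smul]
    linear_combination z1 * hpq'

theorem isCompact_numRange {d : ℕ} (A : Matrix (Fin d) (Fin d) ℂ) :
    IsCompact (numRange A) := by
  have hlin : ∃ L : EuclideanSpace ℂ (Fin d) →ₗ[ℂ] EuclideanSpace ℂ (Fin d),
      ∀ x, L x = (WithLp.toLp 2 (A.mulVec x : Fin d → ℂ) : EuclideanSpace ℂ (Fin d)) := by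
    refine ⟨{ toFun := fun x => (WithLp.toLp 2 (A.mulVec x : Fin d → ℂ) : EuclideanSpace ℂ (Fin d)),
              map_add' := ?_, map_smul' := ?_ }, fun _ => rfl⟩
    · intro x y
      show (WithLp.toLp 2 (A.mulVec (x + y) : Fin d → ℂ) : EuclideanSpace ℂ (Fin d)) = _
      rw [Matrix.mulVec_add, WithLp.toLp_add]
    · intro c x
      show (WithLp.toLp 2 (A.mulVec (c • x) : Fin d → ℂ) : EuclideanSpace ℂ (Fin d)) = _
      rw [Matrix.mulVec_smul]
      rfl
  obtain ⟨L, hL⟩ := hlin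
  have hcont : Continuous fun x : EuclideanSpace ℂ (Fin d) => sesq A x x := by
    have hLc : Continuous L := L.continuous_of_finiteDimensional
    have hC : Continuous fun x : EuclideanSpace ℂ (Fin d) => (inner ℂ x (L x) : ℂ) :=
      Continuous.inner continuous_id hLc
    have heq : ∀ x : EuclideanSpace ℂ (Fin d), sesq A x x = (inner ℂ x (L x) : ℂ) :=
      fun x => by rw [hL]; rfl
    simpa only [heq] using hC
  have himg : numRange A
      = (fun x : EuclideanSpace ℂ (Fin d) => sesq A x x) '' Metric.sphere 0 1 := by
    ext z
    simp only [Set.mem_image, mem_sphere_zero_iff_norm]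
    constructor
    · rintro ⟨x, h1, h2⟩
      exact ⟨x, h1, h2.symm⟩
    · rintro ⟨x, h1, h2⟩
      exact mem_numRange_iff.mpr ⟨x, h1, h2.symm⟩
  rw [himg]
  exact (isCompact_sphere 0 1).image hcont


theorem sesq_conjT {d : ℕ} (A : Matrix (Fin d) (Fin d) ℂ) (x y : EuclideanSpace ℂ (Fin d)) :
    sesq Aᴴ x y = (starRingEnd ℂ) (sesq A y x) := by
  simp only [sesq_eq_dot, dotProduct, Matrix.mulVec, Finset.mul_sum, map_sum,
    _root_.map_mul, Matrix.conjTranspose_apply, Pi.star_apply, Complex.star_def,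
    Complex.conj_conj]
  rw [Finset.sum_comm]
  exact Finset.sum_congr rfl fun i _ => Finset.sum_congr rfl fun j _ => by ring

noncomputable def maxEig {d : ℕ} (hd : 0 < d) {H : Matrix (Fin d) (Fin d) ℂ}
    (hH : H.IsHermitian) : ℝ :=
  Finset.univ.sup' ⟨⟨0, hd⟩, Finset.mem_univ _⟩ hH.eigenvalues

theorem mulVec_eigB {d : ℕ} {H : Matrix (Fin d) (Fin d) ℂ} (hH : H.IsHermitian) (i : Fin d) :
    (WithLp.toLp 2 (H.mulVec (hH.eigenvectorBasis i) : Fin d → ℂ) : EuclideanSpace ℂ (Fin d))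
      = ((hH.eigenvalues i : ℝ) : ℂ) • (hH.eigenvectorBasis i : EuclideanSpace ℂ (Fin d)) := by
  have h7 := hH.mulVec_eigenvectorBasis i
  apply WithLp.ofLp_injective 2
  funext j
  have h8 := congrFun h7 j
  simpa [Complex.real_smul] using h8

theorem sesq_eig {d : ℕ} {H : Matrix (Fin d) (Fin d) ℂ} (hH : H.IsHermitian)
    (x : EuclideanSpace ℂ (Fin d)) (i : Fin d) :
    sesq H (hH.eigenvectorBasis i) x
      = ((hH.eigenvalues i : ℝ) : ℂ) * inner ℂ (hH.eigenvectorBasis i) x := by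
  have hsym : ∀ u v : EuclideanSpace ℂ (Fin d),
      sesq H u v = (starRingEnd ℂ) (sesq H v u) := by
    intro u v
    conv_lhs => rw [← hH.eq]
    rw [sesq_conjT]
  rw [hsym]
  have h2 : sesq H x (hH.eigenvectorBasis i)
      = ((hH.eigenvalues i : ℝ) : ℂ) * inner ℂ x (hH.eigenvectorBasis i) := by
    rw [sesq, mulVec_eigB hH i]
    exact inner_smul_right _ _ _
  rw [h2, _root_.map_mul, Complex.conj_ofReal, inner_conj_symm]

theorem re_sesq_le {d : ℕ} (hd : 0 < d) {H : Matrix (Fin d) (Fin d) ℂ} (hH : H.IsHermitian)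
    (x : EuclideanSpace ℂ (Fin d)) (hx : ‖x‖ = 1) : (sesq H x x).re ≤ maxEig hd hH := by
  set e := hH.eigenvectorBasis with he
  set c : Fin d → ℂ := fun i => (inner ℂ (e i) x : ℂ) with hcdef
  have hterm : ∀ i, (inner ℂ x (e i) : ℂ) * (inner ℂ (e i) (WithLp.toLp 2 (H.mulVec x : Fin d → ℂ) :
      EuclideanSpace ℂ (Fin d)) : ℂ) = ((hH.eigenvalues i * ‖c i‖ ^ 2 : ℝ) : ℂ) := by
    intro i
    have h2 : (inner ℂ (e i) (WithLp.toLp 2 (H.mulVec x : Fin d → ℂ) : EuclideanSpace ℂ (Fin d)) : ℂ)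
        = ((hH.eigenvalues i : ℝ) : ℂ) * c i := sesq_eig hH x i
    have h3 : (inner ℂ x (e i) : ℂ) = (starRingEnd ℂ) (c i) := (inner_conj_symm _ _).symm
    rw [h2, h3]
    rw [show (starRingEnd ℂ) (c i) * (((hH.eigenvalues i : ℝ) : ℂ) * c i)
        = ((hH.eigenvalues i : ℝ) : ℂ) * (c i * (starRingEnd ℂ) (c i)) from by ring,
      Complex.mul_conj']
    push_cast
    ring
  have h1 : sesq H x x = ((∑ i, hH.eigenvalues i * ‖c i‖ ^ 2 : ℝ) : ℂ) := by
    rw [sesq, ← OrthonormalBasis.sum_inner_mul_inner e]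
    push_cast
    exact Finset.sum_congr rfl fun i _ => by rw [hterm i]; push_cast; ring
  have h5 : ∑ i, ‖c i‖ ^ 2 = 1 := by
    have h6 := OrthonormalBasis.sum_inner_mul_inner e x x
    rw [inner_self_eq_norm_sq_to_K, hx] at h6
    simp only [RCLike.ofReal_one, one_pow] at h6
    have h7 : ((∑ i, ‖c i‖ ^ 2 : ℝ) : ℂ) = 1 := by
      push_cast
      rw [← h6]
      refine Finset.sum_congr rfl fun i _ => ?_
      rw [show (inner ℂ x (e i) : ℂ) = (starRingEnd ℂ) (c i) from (inner_conj_symm _ _).symm]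
      rw [show (starRingEnd ℂ) (c i) * c i = c i * (starRingEnd ℂ) (c i) from mul_comm _ _,
        Complex.mul_conj']
    exact_mod_cast h7
  rw [h1, Complex.ofReal_re]
  calc ∑ i, hH.eigenvalues i * ‖c i‖ ^ 2
      ≤ ∑ i, maxEig hd hH * ‖c i‖ ^ 2 := by
        refine Finset.sum_le_sum fun i _ => ?_
        exact mul_le_mul_of_nonneg_right (Finset.le_sup' _ (Finset.mem_univ i)) (sq_nonneg _)
    _ = maxEig hd hH := by rw [← Finset.mul_sum, h5, mul_one]

theorem exists_sesq_eq_maxEig {d : ℕ} (hd : 0 < d) {H : Matrix (Fin d) (Fin d) ℂ}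
    (hH : H.IsHermitian) :
    ∃ x : EuclideanSpace ℂ (Fin d), ‖x‖ = 1 ∧ sesq H x x = ((maxEig hd hH : ℝ) : ℂ) := by
  obtain ⟨i0, -, hi0⟩ := Finset.exists_mem_eq_sup' (⟨⟨0, hd⟩, Finset.mem_univ _⟩ :
    (Finset.univ : Finset (Fin d)).Nonempty) hH.eigenvalues
  refine ⟨hH.eigenvectorBasis i0, hH.eigenvectorBasis.orthonormal.1 i0, ?_⟩
  rw [sesq, mulVec_eigB hH i0, inner_smul_right, inner_self_eq_norm_sq_to_K,
    hH.eigenvectorBasis.orthonormal.1 i0]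
  rw [show maxEig hd hH = hH.eigenvalues i0 from hi0]
  norm_num

theorem maxEig_root {d : ℕ} (hd : 0 < d) {H : Matrix (Fin d) (Fin d) ℂ} (hH : H.IsHermitian) :
    (((maxEig hd hH : ℝ) : ℂ) • (1 : Matrix (Fin d) (Fin d) ℂ) - H).det = 0 := by
  obtain ⟨i0, -, hi0⟩ := Finset.exists_mem_eq_sup' (⟨⟨0, hd⟩, Finset.mem_univ _⟩ :
    (Finset.univ : Finset (Fin d)).Nonempty) hH.eigenvalues
  rw [← Matrix.exists_mulVec_eq_zero_iff]
  refine ⟨(hH.eigenvectorBasis i0 : Fin d → ℂ), ?_, ?_⟩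
  · intro h0
    have h1 := hH.eigenvectorBasis.orthonormal.1 i0
    rw [show (hH.eigenvectorBasis i0 : EuclideanSpace ℂ (Fin d)) = 0 from by simpa using congrArg (WithLp.toLp 2) h0] at h1
    norm_num at h1
  · rw [Matrix.sub_mulVec, Matrix.smul_mulVec, Matrix.one_mulVec]
    have h2 : H.mulVec (hH.eigenvectorBasis i0) = ((hH.eigenvalues i0 : ℝ) : ℂ) •
        (hH.eigenvectorBasis i0 : Fin d → ℂ) := congrArg WithLp.ofLp (mulVec_eigB hH i0)
    rw [h2, show maxEig hd hH = hH.eigenvalues i0 from hi0, sub_self]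

theorem root_le_maxEig {d : ℕ} (hd : 0 < d) {H : Matrix (Fin d) (Fin d) ℂ} (hH : H.IsHermitian)
    (w : ℝ) (hw : (((w : ℝ) : ℂ) • (1 : Matrix (Fin d) (Fin d) ℂ) - H).det = 0) :
    w ≤ maxEig hd hH := by
  rw [← Matrix.exists_mulVec_eq_zero_iff] at hw
  obtain ⟨v, hv0, hv⟩ := hw
  rw [Matrix.sub_mulVec, Matrix.smul_mulVec, Matrix.one_mulVec, sub_eq_zero] at hv
  -- hv : (w:ℂ) • v = H *ᵥ v
  set vE : EuclideanSpace ℂ (Fin d) := WithLp.toLp 2 v with hvE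
  have hnv : ‖vE‖ ≠ 0 := by
    intro h
    have h2 : vE = 0 := norm_eq_zero.mp h
    exact hv0 (congrArg WithLp.ofLp h2)
  set u : EuclideanSpace ℂ (Fin d) := ((‖vE‖⁻¹ : ℝ) : ℂ) • vE with hu
  have hu1 : ‖u‖ = 1 := by
    rw [hu, norm_smul, Complex.norm_real, Real.norm_eq_abs,
      _root_.abs_of_nonneg (inv_nonneg.2 (norm_nonneg _)), inv_mul_cancel₀ hnv]
  have hsv : sesq H vE vE = ((w : ℂ)) * ((‖vE‖ : ℝ) : ℂ) ^ 2 := by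
    rw [sesq]
    rw [show (WithLp.toLp 2 (H.mulVec vE : Fin d → ℂ) : EuclideanSpace ℂ (Fin d)) = (w : ℂ) • vE from by
      simp only [hvE, WithLp.ofLp_toLp]; rw [← hv, WithLp.toLp_smul]]
    rw [inner_smul_right, inner_self_eq_norm_sq_to_K]
    rfl
  have hsu : sesq H u u = (w : ℂ) := by
    rw [hu, sesq_eq_dot]
    rw [show ((((‖vE‖⁻¹ : ℝ) : ℂ) • vE : EuclideanSpace ℂ (Fin d)) : Fin d → ℂ)
        = ((‖vE‖⁻¹ : ℝ) : ℂ) • (vE : Fin d → ℂ) from rfl,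
      Matrix.mulVec_smul, star_smul, smul_dotProduct, dotProduct_smul]
    rw [show dotProduct (star (vE : Fin d → ℂ)) (H.mulVec vE) = sesq H vE vE from
      (sesq_eq_dot H vE vE).symm, hsv]
    simp only [smul_eq_mul]
    rw [show star ((‖vE‖⁻¹ : ℝ) : ℂ) = ((‖vE‖⁻¹ : ℝ) : ℂ) from by
      rw [Complex.star_def, Complex.conj_ofReal]]
    have harith : ‖vE‖⁻¹ * (‖vE‖⁻¹ * (w * ‖vE‖ ^ 2)) = w := by
      rw [pow_two, show ‖vE‖⁻¹ * (‖vE‖⁻¹ * (w * (‖vE‖ * ‖vE‖)))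
          = (‖vE‖⁻¹ * ‖vE‖) * (‖vE‖⁻¹ * ‖vE‖) * w from by ring,
        inv_mul_cancel₀ hnv, one_mul, one_mul]
    push_cast
    exact_mod_cast congrArg (fun r : ℝ => (r : ℂ)) harith
  have := re_sesq_le hd hH u hu1
  rw [hsu] at this
  simpa using this

theorem maxEig_eq_of_det {d : ℕ} (hd : 0 < d) {H1 H2 : Matrix (Fin d) (Fin d) ℂ}
    (h1 : H1.IsHermitian) (h2 : H2.IsHermitian)
    (h : ∀ w : ℂ, (w • (1 : Matrix (Fin d) (Fin d) ℂ) - H1).det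
        = (w • (1 : Matrix (Fin d) (Fin d) ℂ) - H2).det) :
    maxEig hd h1 = maxEig hd h2 := by
  refine le_antisymm ?_ ?_
  · exact root_le_maxEig hd h2 _ (by rw [← h]; exact maxEig_root hd h1)
  · exact root_le_maxEig hd h1 _ (by rw [h]; exact maxEig_root hd h2)


noncomputable def Hmat {d : ℕ} (A : Matrix (Fin d) (Fin d) ℂ) (θ : ℝ) :
    Matrix (Fin d) (Fin d) ℂ :=
  (1/2 : ℂ) • (Complex.exp (-(θ : ℂ) * Complex.I) • A
      + Complex.exp ((θ : ℂ) * Complex.I) • Aᴴ)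

theorem conj_exp_theta (θ : ℝ) :
    (starRingEnd ℂ) (Complex.exp ((θ : ℂ) * Complex.I)) = Complex.exp (-(θ : ℂ) * Complex.I) := by
  rw [← Complex.exp_conj]
  congr 1
  rw [_root_.map_mul, Complex.conj_ofReal, Complex.conj_I]
  ring

theorem conj_exp_theta' (θ : ℝ) :
    (starRingEnd ℂ) (Complex.exp (-(θ : ℂ) * Complex.I)) = Complex.exp ((θ : ℂ) * Complex.I) := by
  rw [← Complex.exp_conj]
  congr 1
  rw [show (-(θ : ℂ) * Complex.I) = ((-θ : ℝ) : ℂ) * Complex.I from by push_cast; ring,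
    _root_.map_mul, Complex.conj_ofReal, Complex.conj_I]
  push_cast
  ring

theorem Hmat_herm {d : ℕ} (A : Matrix (Fin d) (Fin d) ℂ) (θ : ℝ) : (Hmat A θ).IsHermitian := by
  show (Hmat A θ)ᴴ = Hmat A θ
  simp only [Hmat]
  rw [Matrix.conjTranspose_smul, Matrix.conjTranspose_add, Matrix.conjTranspose_smul,
    Matrix.conjTranspose_smul, Matrix.conjTranspose_conjTranspose]
  simp only [Complex.star_def]
  rw [conj_exp_theta, conj_exp_theta']
  rw [show (starRingEnd ℂ) (1/2 : ℂ) = (1/2 : ℂ) from by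
    rw [show (1/2 : ℂ) = ((1/2 : ℝ) : ℂ) from by norm_num, Complex.conj_ofReal]]
  rw [add_comm]

theorem sesq_Hmat {d : ℕ} (A : Matrix (Fin d) (Fin d) ℂ) (θ : ℝ)
    (x : EuclideanSpace ℂ (Fin d)) :
    sesq (Hmat A θ) x x
      = (((Complex.exp (-(θ : ℂ) * Complex.I) * sesq A x x).re : ℝ) : ℂ) := by
  simp only [Hmat]
  rw [sesq_smul_mat, sesq_add_mat, sesq_smul_mat, sesq_smul_mat]
  rw [show sesq Aᴴ x x = (starRingEnd ℂ) (sesq A x x) from sesq_conjT A x x]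
  rw [show Complex.exp ((θ : ℂ) * Complex.I) * (starRingEnd ℂ) (sesq A x x)
      = (starRingEnd ℂ) (Complex.exp (-(θ : ℂ) * Complex.I) * sesq A x x) from by
    rw [_root_.map_mul, conj_exp_theta']]
  rw [Complex.add_conj]
  push_cast
  ring

theorem numRange_conj {d : ℕ} (A : Matrix (Fin d) (Fin d) ℂ) :
    (fun z => (starRingEnd ℂ) z) '' numRange A = numRange Aᴴ := by
  ext z
  simp only [Set.mem_image]
  constructor
  · rintro ⟨w, hw, rfl⟩
    obtain ⟨x, hx, rfl⟩ := mem_numRange_iff.mp hw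
    exact mem_numRange_iff.mpr ⟨x, hx, (sesq_conjT A x x).symm⟩
  · intro hz
    obtain ⟨x, hx, rfl⟩ := mem_numRange_iff.mp hz
    exact ⟨sesq A x x, mem_numRange_iff.mpr ⟨x, hx, rfl⟩, (sesq_conjT A x x).symm⟩

theorem numRange_subset {d : ℕ} (hd : 0 < d) (A : Matrix (Fin d) (Fin d) ℂ)
    (hdet : ∀ (θ : ℝ) (w : ℂ),
      (w • (1 : Matrix (Fin d) (Fin d) ℂ) - Hmat A θ).det
        = (w • (1 : Matrix (Fin d) (Fin d) ℂ) - Hmat Aᴴ θ).det) :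
    numRange Aᴴ ⊆ numRange A := by
  intro z hz
  by_contra hzn
  obtain ⟨x, hx, hzx⟩ := mem_numRange_iff.mp hz
  obtain ⟨f, u, hfu, huz⟩ := geometric_hahn_banach_closed_point (convex_numRange A)
    (isCompact_numRange A).isClosed hzn
  set cc : ℂ := ⟨f 1, f Complex.I⟩ with hcc
  have hf : ∀ w : ℂ, f w = ((starRingEnd ℂ) cc * w).re := by
    intro w
    have hre : ((starRingEnd ℂ) cc * w).re = cc.re * w.re + cc.im * w.im := by
      rw [Complex.mul_re, Complex.conj_re, Complex.conj_im]
      ring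
    have hw : w = w.re • (1 : ℂ) + w.im • Complex.I := by
      apply Complex.ext <;> simp
    rw [hre]
    calc f w = f (w.re • (1 : ℂ) + w.im • Complex.I) := by rw [← hw]
      _ = w.re * f 1 + w.im * f Complex.I := by
          rw [map_add, f.map_smul, f.map_smul, smul_eq_mul, smul_eq_mul]
      _ = cc.re * w.re + cc.im * w.im := by rw [hcc]; ring
  -- a point of the numerical range
  have hx0 : ∃ x0 : EuclideanSpace ℂ (Fin d), ‖x0‖ = 1 :=
    ⟨EuclideanSpace.single ⟨0, hd⟩ 1, by simp [EuclideanSpace.norm_single]⟩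
  have hcne : cc ≠ 0 := by
    intro h0
    obtain ⟨x0, hx01⟩ := hx0
    have hm : sesq A x0 x0 ∈ numRange A := mem_numRange_iff.mpr ⟨x0, hx01, rfl⟩
    have h1 := hfu _ hm
    rw [hf _, h0] at h1
    rw [hf z, h0] at huz
    simp at h1 huz
    linarith
  set θ : ℝ := cc.arg with hθ
  have habs : ((‖cc‖ : ℝ) : ℂ) * Complex.exp ((θ : ℂ) * Complex.I) = cc :=
    Complex.norm_mul_exp_arg_mul_I cc
  have hconj : (starRingEnd ℂ) cc
      = ((‖cc‖ : ℝ) : ℂ) * Complex.exp (-(θ : ℂ) * Complex.I) := by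
    conv_lhs => rw [← habs]
    rw [_root_.map_mul, Complex.conj_ofReal, conj_exp_theta]
  have hfw : ∀ w : ℂ, f w = ‖cc‖ * (Complex.exp (-(θ : ℂ) * Complex.I) * w).re := by
    intro w
    rw [hf w, hconj, mul_assoc, Complex.re_ofReal_mul]
  have habspos : 0 < ‖cc‖ := by
    simpa using hcne
  -- the maximum eigenvalue
  have hH1 := Hmat_herm A θ
  have hH2 := Hmat_herm Aᴴ θ
  have hMeq : maxEig hd hH1 = maxEig hd hH2 := maxEig_eq_of_det hd hH1 hH2 (hdet θ)
  -- bound for z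
  have hzbound : (Complex.exp (-(θ : ℂ) * Complex.I) * z).re ≤ maxEig hd hH1 := by
    have h1 : sesq (Hmat Aᴴ θ) x x
        = (((Complex.exp (-(θ : ℂ) * Complex.I) * z).re : ℝ) : ℂ) := by
      rw [sesq_Hmat, hzx]
    have h2 := re_sesq_le hd hH2 x hx
    rw [h1, Complex.ofReal_re] at h2
    rw [hMeq]
    exact h2
  -- attainment in numRange A
  obtain ⟨y, hy, hyv⟩ := exists_sesq_eq_maxEig hd hH1
  have hz0 : sesq A y y ∈ numRange A := mem_numRange_iff.mpr ⟨y, hy, rfl⟩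
  have hz0re : (Complex.exp (-(θ : ℂ) * Complex.I) * sesq A y y).re = maxEig hd hH1 := by
    have h1 := sesq_Hmat A θ y
    rw [hyv] at h1
    exact_mod_cast h1.symm
  have hle : f z ≤ f (sesq A y y) := by
    rw [hfw z, hfw (sesq A y y), hz0re]
    exact mul_le_mul_of_nonneg_left hzbound (le_of_lt habspos) |>.trans_eq rfl
  have hlt := hfu _ hz0
  linarith

theorem stmt4 {d : ℕ} (hd : 3 ≤ d) (A : Matrix (Fin d) (Fin d) ℂ)
    (hC : CondC A) (hre : A.det.im = 0) (hpos : 0 < (-1 : ℝ) ^ (d - 1) * A.det.re) :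
    (fun z => (starRingEnd ℂ) z) '' numRange A = numRange A := by
  have hd0 : 0 < d := lt_of_lt_of_le (by norm_num) hd
  obtain ⟨P, hP⟩ := hC
  have hdet : ∀ (θ : ℝ) (w : ℂ),
      (w • (1 : Matrix (Fin d) (Fin d) ℂ) - Hmat A θ).det
        = (w • (1 : Matrix (Fin d) (Fin d) ℂ) - Hmat Aᴴ θ).det := by
    intro θ w
    have h1 := hP θ w
    have h2 := hP (-θ) w
    -- rewrite the matrix of h2
    have hM : (1/2 : ℂ) • (Complex.exp (-((-θ : ℝ) : ℂ) * Complex.I) • A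
        + Complex.exp (((-θ : ℝ) : ℂ) * Complex.I) • Aᴴ) = Hmat Aᴴ θ := by
      simp only [Hmat]
      rw [Matrix.conjTranspose_conjTranspose]
      rw [show (-((-θ : ℝ) : ℂ) * Complex.I) = (θ : ℂ) * Complex.I from by push_cast; ring,
        show (((-θ : ℝ) : ℂ) * Complex.I) = -(θ : ℂ) * Complex.I from by push_cast; ring]
      rw [add_comm]
    rw [hM] at h2
    -- rewrite the real parts
    have hRe : (Complex.exp (-(d : ℂ) * ((-θ : ℝ) : ℂ) * Complex.I) * A.det).re
        = (Complex.exp (-(d : ℂ) * (θ : ℂ) * Complex.I) * A.det).re := by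
      rw [show (-(d : ℂ) * ((-θ : ℝ) : ℂ) * Complex.I)
          = (((d * θ : ℝ)) : ℂ) * Complex.I from by push_cast; ring,
        show (-(d : ℂ) * (θ : ℂ) * Complex.I)
          = (((-(d * θ) : ℝ)) : ℂ) * Complex.I from by push_cast; ring]
      rw [Complex.mul_re, Complex.mul_re, hre, mul_zero, mul_zero,
        Complex.exp_ofReal_mul_I_re, Complex.exp_ofReal_mul_I_re, Real.cos_neg]
    rw [hRe] at h2
    show (w • (1 : Matrix (Fin d) (Fin d) ℂ) - Hmat A θ).det
        = (w • (1 : Matrix (Fin d) (Fin d) ℂ) - Hmat Aᴴ θ).det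
    calc (w • (1 : Matrix (Fin d) (Fin d) ℂ) - Hmat A θ).det
        = Polynomial.aeval w P - ((-1/2 : ℂ)) ^ (d - 1)
            * ((Complex.exp (-(d : ℂ) * (θ : ℂ) * Complex.I) * A.det).re : ℂ) := h1
      _ = (w • (1 : Matrix (Fin d) (Fin d) ℂ) - Hmat Aᴴ θ).det := h2.symm
  have hdet' : ∀ (θ : ℝ) (w : ℂ),
      (w • (1 : Matrix (Fin d) (Fin d) ℂ) - Hmat Aᴴ θ).det
        = (w • (1 : Matrix (Fin d) (Fin d) ℂ) - Hmat Aᴴᴴ θ).det := by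
    intro θ w
    rw [Matrix.conjTranspose_conjTranspose]
    exact (hdet θ w).symm
  have h1 : numRange Aᴴ ⊆ numRange A := numRange_subset hd0 A hdet
  have h2 : numRange A ⊆ numRange Aᴴ := by
    have h3 := numRange_subset hd0 Aᴴ hdet'
    rwa [Matrix.conjTranspose_conjTranspose] at h3
  rw [numRange_conj]
  exact Set.Subset.antisymm h1 h2
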